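/- Every left ideal L of the n-th Weyl algebra W admits a universal Gröbner basis, i.e. a finite subset V ⊆ L that is a Gröbner basis of L with respect to every normal ordering ≼ of W. -/

import Mathlib

/-- A total ordering on `S`: an antisymmetric, transitive and total binary relation. -/
def IsTotalOrdering {S : Type*} (r : S → S → Prop) : Prop :=
  (∀ a b, r a b → r b a → a = b) ∧ (∀ a b c, r a b → r b c → r a c) ∧ (∀ a b, r a b ∨ r b a)

/-- `TO S` is the set of all total orderings on `S`. -/
def TO (S : Type*) : Type _ := {r : S → S → Prop // IsTotalOrdering r}

/-- The underlying relation of a total ordering. -/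
def TO.rel {S : Type*} (r : TO S) : S → S → Prop := Subtype.val r

/-- The subbasic open set `𝔘_{(a,b)} = {≼ ∈ TO(S) : a ≼ b}`. -/
def USet {S : Type*} (a b : S) : Set (TO S) := {r | r.rel a b}

/-- The topology `𝒰` on `TO S`: the coarsest topology for which all `𝔘_{(a,b)}` are open. -/
instance TOTop (S : Type*) : TopologicalSpace (TO S) :=
  TopologicalSpace.generateFrom {U | ∃ a b, U = USet a b}


open MvPolynomial

section Weyl

variable {K : Type*} [Field K] {n : ℕ} {W : Type*} [Ring W] [Algebra K W]

/-- The normal monomial `ξ^λ ∂^μ` of the Weyl algebra, for generators `ξ i` and `∂ i`. -/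
def nm (ξ dd : Fin n → W) (lam mu : Fin n → ℕ) : W :=
  (List.ofFn fun i => ξ i ^ lam i).prod * (List.ofFn fun i => dd i ^ mu i).prod

/-- The set `N` of normal monomials `ξ^λ ∂^μ` of the Weyl algebra. -/
def NormalMonomials (ξ dd : Fin n → W) : Set W := {w | ∃ lam mu, w = nm ξ dd lam mu}

/-- The normal monomial `ξ^λ ∂^μ` as an element of `N`. -/
def nmEl (ξ dd : Fin n → W) (lam mu : Fin n → ℕ) : ↥(NormalMonomials ξ dd) :=
  ⟨nm ξ dd lam mu, lam, mu, rfl⟩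

/-- A normal ordering of the Weyl algebra: a total ordering `≼` on `N` such that
`1 = ξ^0∂^0 ≼ ξ^λ∂^μ` for all `λ, μ`, and which is compatible with the addition of
exponents. -/
def IsNormalOrdering (ξ dd : Fin n → W) (r : TO ↥(NormalMonomials ξ dd)) : Prop :=
  (∀ lam mu, r.rel (nmEl ξ dd 0 0) (nmEl ξ dd lam mu)) ∧
  ∀ lam mu rho sig al be : Fin n → ℕ,
    r.rel (nmEl ξ dd lam mu) (nmEl ξ dd rho sig) →
      r.rel (nmEl ξ dd (lam + al) (mu + be)) (nmEl ξ dd (rho + al) (sig + be))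

/-- The set `NO(N)` of all normal orderings. -/
def NOSet (ξ dd : Fin n → W) : Set (TO ↥(NormalMonomials ξ dd)) :=
  {r | IsNormalOrdering ξ dd r}

/-- The exponent vector `(λ, μ)` as a finitely supported function on `Fin n ⊕ Fin n`. -/
noncomputable def expof {n : ℕ} (lam mu : Fin n → ℕ) : (Fin n ⊕ Fin n) →₀ ℕ :=
  Finsupp.equivFunOnFinite.symm (Sum.elim lam mu)

/-- The normal monomial of `N` corresponding to an exponent vector `d`. -/
noncomputable def nmD (ξ dd : Fin n → W) (d : (Fin n ⊕ Fin n) →₀ ℕ) :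
    ↥(NormalMonomials ξ dd) :=
  nmEl ξ dd (fun i => d (Sum.inl i)) (fun i => d (Sum.inr i))

/-- The ordering on exponent vectors induced by a total ordering `r` on `N`. -/
noncomputable def rD (ξ dd : Fin n → W) (r : TO ↥(NormalMonomials ξ dd))
    (d e : (Fin n ⊕ Fin n) →₀ ℕ) : Prop :=
  r.rel (nmD ξ dd d) (nmD ξ dd e)

/-- `IsLTerm ξ dd Φ r w d` says that the exponent vector `d`, i.e. the normal monomial
`ξ^λ∂^μ` with `(λ,μ) = d`, is the `r`-greatest element of the support of `w`, that is,
`lt_≼(w) = ξ^λ∂^μ` (equivalently `LT_≼(w) = X^λY^μ`). -/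
noncomputable def IsLTerm (ξ dd : Fin n → W)
    (Φ : W ≃ₗ[K] MvPolynomial (Fin n ⊕ Fin n) K) (r : TO ↥(NormalMonomials ξ dd))
    (w : W) (d : (Fin n ⊕ Fin n) →₀ ℕ) : Prop :=
  d ∈ (Φ w).support ∧ ∀ c ∈ (Φ w).support, rD ξ dd r c d

/-- The ideal `LT_≼(L) = ⟨LT_≼(x) : x ∈ L, x ≠ 0⟩` of `K[X,Y]`. -/
noncomputable def LTIdeal (ξ dd : Fin n → W)
    (Φ : W ≃ₗ[K] MvPolynomial (Fin n ⊕ Fin n) K) (r : TO ↥(NormalMonomials ξ dd))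
    (L : Set W) : Ideal (MvPolynomial (Fin n ⊕ Fin n) K) :=
  Ideal.span {p | ∃ x ∈ L, x ≠ 0 ∧ ∃ d, IsLTerm ξ dd Φ r x d ∧ p = monomial d 1}

/-- `B` is a Gröbner basis of the left ideal `L` with respect to `r`: `B` is a finite
subset of `L` with `L = Σ_{b∈B} W·b` and `LT_≼(L) = ⟨LT_≼(b) : b ∈ B, b ≠ 0⟩`. -/
noncomputable def IsGroebnerBasis (ξ dd : Fin n → W)
    (Φ : W ≃ₗ[K] MvPolynomial (Fin n ⊕ Fin n) K) (r : TO ↥(NormalMonomials ξ dd))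
    (L : Submodule W W) (B : Finset W) : Prop :=
  (B : Set W) ⊆ (L : Set W) ∧ Submodule.span W (B : Set W) = L ∧
  LTIdeal ξ dd Φ r (L : Set W) =
    Ideal.span {p | ∃ b ∈ B, b ≠ 0 ∧ ∃ d, IsLTerm ξ dd Φ r b d ∧ p = monomial d 1}

end Weyl

/-!
Normal orderings form a closed, hence compact, subset of the space of total orderings of the
normal monomials. Fix a normal ordering `≼`. Since `ξ^α∂^β · ξ^λ∂^μ` is `ξ^(α+λ)∂^(β+μ)` up to
terms with componentwise smaller exponents, leading exponents behave as in a commutative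
polynomial ring, and by Dickson's lemma finitely many elements of `L` have `≼`-leading
exponents dividing every `≼`-leading exponent of `L`. Every normal ordering `≼'` that gives
these finitely many elements the same leading exponents (an open condition) makes them a
Gröbner basis: division along `≼` shows both that they generate `L` and that every
`≼'`-leading exponent of `L` is divisible by one of theirs. Finitely many of these open sets
cover the normal orderings, and the union of the corresponding finite sets is a universal
Gröbner basis.
-/

namespace TO

variable {S : Type*}

lemma rel_total (r : TO S) (a b : S) : r.rel a b ∨ r.rel b a := r.2.2.2 a b

lemma rel_refl (r : TO S) (a : S) : r.rel a a := (r.rel_total a a).elim id id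

lemma rel_antisymm (r : TO S) {a b : S} (hab : r.rel a b) (hba : r.rel b a) : a = b :=
  r.2.1 a b hab hba

lemma rel_trans (r : TO S) {a b c : S} (hab : r.rel a b) (hbc : r.rel b c) : r.rel a c :=
  r.2.2.1 a b c hab hbc

lemma exists_max_image {ι : Type*} (r : TO S) (f : ι → S) {s : Finset ι} (hs : s.Nonempty) :
    ∃ a ∈ s, ∀ b ∈ s, r.rel (f b) (f a) := by
  induction hs using Finset.Nonempty.cons_induction with
  | singleton a => exact ⟨a, by simp, by simpa using r.rel_refl (f a)⟩
  | cons a s _ _ ih =>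
    obtain ⟨c, hc, hmax⟩ := ih
    rcases r.rel_total (f a) (f c) with hac | hca
    · exact ⟨c, by simp [hc], by simpa [hac] using hmax⟩
    · refine ⟨a, by simp, ?_⟩
      simpa [r.rel_refl (f a)] using fun b hb => r.rel_trans (hmax b hb) hca

lemma isOpen_USet (a b : S) : IsOpen (USet a b) :=
  TopologicalSpace.isOpen_generateFrom_of_mem ⟨a, b, rfl⟩

/-- By totality, the complement of `USet a b` is `USet b a` (or empty if `a = b`), hence open. -/
lemma isClosed_USet (a b : S) : IsClosed (USet a b) := by
  rw [← isOpen_compl_iff]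
  by_cases hab : a = b
  · convert isOpen_empty
    ext r
    simp [USet, hab, r.rel_refl b]
  · convert isOpen_USet b a using 1
    ext r
    exact ⟨(r.rel_total a b).resolve_left, fun hba hab' => hab (r.rel_antisymm hab' hba)⟩

/-- The pointwise limit of an ultrafilter of total orderings is again a total ordering. -/
instance compactSpace : CompactSpace (TO S) := by
  refine ⟨isCompact_iff_ultrafilter_le_nhds.2 fun F _ => ?_⟩
  let lim : S → S → Prop := fun a b => USet a b ∈ F
  have hlim : IsTotalOrdering lim := by
    refine ⟨fun a b hab hba => ?_, fun a b c hab hbc => ?_, fun a b => ?_⟩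
    · obtain ⟨r, hr⟩ := F.nonempty_of_mem (F.inter_mem hab hba)
      exact r.rel_antisymm hr.1 hr.2
    · exact F.mem_of_superset (F.inter_mem hab hbc) fun r hr => r.rel_trans hr.1 hr.2
    · by_contra! h
      obtain ⟨r, hr⟩ := F.nonempty_of_mem
        (F.inter_mem (F.compl_mem_iff_notMem.2 h.1) (F.compl_mem_iff_notMem.2 h.2))
      exact (r.rel_total a b).elim hr.1 hr.2
  let r₀ : TO S := ⟨lim, hlim⟩
  refine ⟨r₀, Set.mem_univ _, ?_⟩
  rw [show nhds r₀ = _ from TopologicalSpace.nhds_generateFrom]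
  refine le_iInf₂ ?_
  rintro _ ⟨hmem, a, b, rfl⟩
  exact Filter.le_principal_iff.2 hmem

end TO

lemma isClosed_NOSet {n : ℕ} {W : Type*} [Ring W] (ξ dd : Fin n → W) :
    IsClosed (NOSet ξ dd) := by
  simp only [NOSet, IsNormalOrdering, Set.ofPred_and, Set.ofPred_forall]
  refine .inter (isClosed_iInter fun _ => isClosed_iInter fun _ => TO.isClosed_USet _ _) ?_
  refine isClosed_iInter fun _ => isClosed_iInter fun _ => isClosed_iInter fun _ =>
    isClosed_iInter fun _ => isClosed_iInter fun _ => isClosed_iInter fun _ => ?_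
  exact isClosed_imp (TO.isOpen_USet _ _) (TO.isClosed_USet _ _)

section PowProd

variable {M : Type*} [Monoid M] {m : ℕ}

def powProd (x : Fin m → M) (a : Fin m → ℕ) : M := (List.ofFn fun i => x i ^ a i).prod

lemma powProd_succ (x : Fin (m + 1) → M) (a : Fin (m + 1) → ℕ) :
    powProd x a = x 0 ^ a 0 * powProd (fun i => x i.succ) (fun i => a i.succ) := by
  simp [powProd, List.ofFn_succ]

@[simp]
lemma powProd_zero (x : Fin m → M) : powProd x 0 = 1 := by
  simp [powProd]

lemma powProd_single (x : Fin m → M) (i : Fin m) (k : ℕ) :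
    powProd x (Pi.single i k) = x i ^ k := by
  induction m with
  | zero => exact i.elim0
  | succ m ih =>
    rw [powProd_succ]
    cases i using Fin.cases with
    | zero => simp [Fin.succ_ne_zero, ← Pi.zero_def]
    | succ i =>
      have hsucc : (fun j => (Pi.single i.succ k : Fin (m + 1) → ℕ) j.succ)
          = Pi.single i k := by
        ext j
        simp [Pi.single_apply]
      rw [hsucc, ih]
      simp [(Fin.succ_ne_zero i).symm]

lemma commute_powProd {x : Fin m → M} {y : M} (a : Fin m → ℕ)
    (h : ∀ i, a i ≠ 0 → Commute y (x i)) : Commute y (powProd x a) := by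
  refine Commute.list_prod_right _ _ fun _ hz => ?_
  obtain ⟨i, rfl⟩ := List.mem_ofFn.1 hz
  by_cases hi : a i = 0
  · simp [hi]
  · exact (h i hi).pow_right _

lemma powProd_add {x : Fin m → M} (hx : ∀ i j, Commute (x i) (x j)) (a b : Fin m → ℕ) :
    powProd x (a + b) = powProd x a * powProd x b := by
  induction m with
  | zero => simp [powProd]
  | succ m ih =>
    have hcomm : Commute (x 0 ^ b 0) (powProd (fun i => x i.succ) fun i => a i.succ) :=
      commute_powProd _ fun i _ => (hx 0 i.succ).pow_left _
    rw [powProd_succ, powProd_succ x a, powProd_succ x b]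
    change x 0 ^ (a 0 + b 0) * powProd _ ((fun i => a i.succ) + fun i => b i.succ) = _
    rw [ih fun i j => hx _ _, pow_add, mul_assoc, ← mul_assoc (x 0 ^ b 0), hcomm.eq]
    simp only [mul_assoc]

end PowProd

lemma induction_on_add_single {ι : Type*} [Finite ι] [DecidableEq ι] {P : (ι → ℕ) → Prop}
    (a : ι → ℕ) (zero : P 0) (add_single : ∀ a i, P a → P (a + Pi.single i 1)) : P a := by
  suffices ∀ c b, P b → P (b + c) by simpa using this a 0 zero
  intro c
  induction c using Pi.single_induction with
  | zero => simp
  | add f g hf hg => exact fun b hb => add_assoc b f g ▸ hg _ (hf b hb)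
  | single i k =>
    induction k with
    | zero => simp
    | succ k ih =>
      intro b hb
      simpa [Pi.single_add, ← add_assoc] using add_single _ i (ih b hb)

section Commutator

variable {R : Type*} [Ring R]

lemma mul_pow_of_mul_eq_mul_add_one {y z : R} (h : y * z = z * y + 1) (k : ℕ) :
    y * z ^ k = z ^ k * y + k • z ^ (k - 1) := by
  induction k with
  | zero => simp
  | succ k ih =>
    rw [pow_succ, ← mul_assoc, ih, add_mul, mul_assoc, h, smul_mul_assoc]
    rcases Nat.eq_zero_or_pos k with rfl | hk
    · simp
    · rw [pow_sub_one_mul hk.ne', Nat.add_sub_cancel, succ_nsmul]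
      noncomm_ring

variable {m : ℕ}

lemma powProd_eq_pow_mul_update {x : Fin m → R} (hx : ∀ i j, Commute (x i) (x j))
    (a : Fin m → ℕ) (i : Fin m) :
    powProd x a = x i ^ a i * powProd x (Function.update a i 0) := by
  have ha : a = Pi.single i (a i) + Function.update a i 0 := by
    ext j
    by_cases hj : j = i <;> simp [hj]
  conv_lhs => rw [ha]
  rw [powProd_add hx, powProd_single]

lemma mul_powProd_of_commutator {x : Fin m → R} (hx : ∀ i j, Commute (x i) (x j)) {y : R}
    {i : Fin m} (hyx : ∀ j ≠ i, Commute y (x j)) (hyi : y * x i = x i * y + 1)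
    (a : Fin m → ℕ) :
    y * powProd x a = powProd x a * y + a i • powProd x (a - Pi.single i 1) := by
  have hrest : Commute y (powProd x (Function.update a i 0)) :=
    commute_powProd _ fun j hj => hyx j fun hji => hj (by simp [hji])
  have hlower : powProd x (a - Pi.single i 1)
      = x i ^ (a i - 1) * powProd x (Function.update a i 0) := by
    rw [powProd_eq_pow_mul_update hx _ i]
    congr 2
    · simp
    · ext j
      by_cases hj : j = i <;> simp [hj]
  rw [powProd_eq_pow_mul_update hx a i, hlower, ← mul_assoc, mul_pow_of_mul_eq_mul_add_one hyi,
    add_mul, mul_assoc, hrest.eq, smul_mul_assoc, mul_assoc]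

end Commutator

lemma monomial_mem_restrictSupport {σ R : Type*} [CommSemiring R] {s : Set (σ →₀ ℕ)}
    {d : σ →₀ ℕ} (hd : d ∈ s) (c : R) : monomial d c ∈ restrictSupport R s := by
  rw [mem_restrictSupport_iff]
  exact (Finset.coe_subset.2 support_monomial_subset).trans (by simpa using hd)

lemma support_sub_smul_subset {σ R : Type*} [DecidableEq σ] [CommRing R]
    (p q : MvPolynomial σ R) (c : R) : (p - c • q).support ⊆ p.support ∪ q.support :=
  (support_sub σ _ _).trans (Finset.union_subset_union le_rfl support_smul)

lemma expof_add {n : ℕ} (a b c d : Fin n → ℕ) :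
    expof (a + c) (b + d) = expof a b + expof c d := by
  ext (i | i) <;> simp [expof]

lemma expof_inl_inr {n : ℕ} (d : (Fin n ⊕ Fin n) →₀ ℕ) :
    expof (fun i => d (Sum.inl i)) (fun i => d (Sum.inr i)) = d := by
  ext (i | i) <;> simp [expof]

lemma expof_le_expof_iff {n : ℕ} {a b c d : Fin n → ℕ} :
    expof a b ≤ expof c d ↔ a ≤ c ∧ b ≤ d := by
  simp [Finsupp.le_def, expof, Sum.forall, Pi.le_def]

lemma expof_lt_expof {n : ℕ} {a b c d : Fin n → ℕ} (hac : a ≤ c) (hbd : b < d) :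
    expof a b < expof c d :=
  lt_of_le_not_ge (expof_le_expof_iff.2 ⟨hac, hbd.le⟩)
    fun h => hbd.not_ge (expof_le_expof_iff.1 h).2

section WeylAlgebra

variable {K : Type*} [Field K] {n : ℕ} {W : Type*} [Ring W] [Algebra K W] {ξ dd : Fin n → W}
  {Φ : W ≃ₗ[K] MvPolynomial (Fin n ⊕ Fin n) K} {r r' : TO (NormalMonomials ξ dd)}
  {L : Submodule W W} {B : Set W}

lemma nm_eq_powProd_mul (lam mu : Fin n → ℕ) :
    nm ξ dd lam mu = powProd ξ lam * powProd dd mu :=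
  rfl

lemma nm_zero_mul_nm (hξ : ∀ i j, ξ i * ξ j = ξ j * ξ i) (al lam mu : Fin n → ℕ) :
    nm ξ dd al 0 * nm ξ dd lam mu = nm ξ dd (al + lam) mu := by
  simp only [nm_eq_powProd_mul, powProd_zero, mul_one, powProd_add hξ, mul_assoc]

lemma nm_add_single (hdd : ∀ i j, dd i * dd j = dd j * dd i) (lam mu : Fin n → ℕ)
    (j : Fin n) :
    nm ξ dd lam (mu + Pi.single j 1) = nm ξ dd lam mu * dd j := by
  rw [nm_eq_powProd_mul, nm_eq_powProd_mul, powProd_add hdd, powProd_single, pow_one, mul_assoc]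

lemma dd_mul_nm (hξ : ∀ i j, ξ i * ξ j = ξ j * ξ i) (hdd : ∀ i j, dd i * dd j = dd j * dd i)
    (hrel : ∀ i j, dd i * ξ j - ξ j * dd i = if i = j then (1 : W) else 0)
    (j : Fin n) (lam mu : Fin n → ℕ) :
    dd j * nm ξ dd lam mu
      = nm ξ dd lam (Pi.single j 1 + mu) + lam j • nm ξ dd (lam - Pi.single j 1) mu := by
  have hcomm : ∀ i ≠ j, Commute (dd j) (ξ i) := fun i hi =>
    sub_eq_zero.1 (by simpa [hi.symm] using hrel j i)
  have hone : dd j * ξ j = ξ j * dd j + 1 := by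
    simpa using sub_eq_iff_eq_add'.1 (hrel j j)
  simp only [nm_eq_powProd_mul]
  rw [← mul_assoc, mul_powProd_of_commutator hξ hcomm hone, powProd_add hdd, powProd_single,
    pow_one, add_mul, smul_mul_assoc, mul_assoc]

lemma apply_nm_mul_nm_sub_monomial_mem (hξ : ∀ i j, ξ i * ξ j = ξ j * ξ i)
    (hdd : ∀ i j, dd i * dd j = dd j * dd i)
    (hrel : ∀ i j, dd i * ξ j - ξ j * dd i = if i = j then (1 : W) else 0)
    (hΦ : ∀ lam mu, Φ (nm ξ dd lam mu) = monomial (expof lam mu) 1)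
    (al be lam mu : Fin n → ℕ) :
    Φ (nm ξ dd al be * nm ξ dd lam mu) - monomial (expof (al + lam) (be + mu)) 1
      ∈ restrictSupport K (Set.Iio (expof (al + lam) (be + mu))) := by
  induction be using induction_on_add_single generalizing al lam mu with
  | zero => simp [nm_zero_mul_nm hξ, hΦ]
  | add_single be j ih =>
    set top := expof (al + lam) (be + Pi.single j 1 + mu)
    set low := expof (al + (lam - Pi.single j 1)) (be + mu)
    have hlow : low < top :=
      expof_lt_expof (add_le_add_right tsub_le_self _) (by simp [add_right_comm be])
    have hsplit : Φ (nm ξ dd al (be + Pi.single j 1) * nm ξ dd lam mu) - monomial top 1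
        = (Φ (nm ξ dd al be * nm ξ dd lam (Pi.single j 1 + mu)) - monomial top 1)
          + lam j • ((Φ (nm ξ dd al be * nm ξ dd (lam - Pi.single j 1) mu) - monomial low 1)
            + monomial low 1) := by
      rw [nm_add_single hdd, mul_assoc, dd_mul_nm hξ hdd hrel, mul_add, mul_smul_comm, map_add,
        map_nsmul, sub_add_cancel, sub_add_eq_add_sub]
    rw [hsplit]
    refine add_mem (by simpa only [top, add_assoc] using ih al lam (Pi.single j 1 + mu))
      (nsmul_mem (add_mem ?_ (monomial_mem_restrictSupport hlow 1)) _)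
    exact restrictSupport_mono K (Set.Iio_subset_Iio hlow.le) (ih al (lam - Pi.single j 1) mu)

lemma apply_nmD (hΦ : ∀ lam mu, Φ (nm ξ dd lam mu) = monomial (expof lam mu) 1)
    (d : (Fin n ⊕ Fin n) →₀ ℕ) :
    Φ (nmD ξ dd d) = monomial d 1 := by
  rw [nmD, nmEl, hΦ, expof_inl_inr]

lemma nmD_injective (hΦ : ∀ lam mu, Φ (nm ξ dd lam mu) = monomial (expof lam mu) 1) :
    Function.Injective (nmD ξ dd) := fun d e h => by
  simpa [apply_nmD hΦ, monomial_eq_monomial_iff] using congrArg (fun w => Φ w.1) h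

lemma rD_trans {d e f : (Fin n ⊕ Fin n) →₀ ℕ} (hde : rD ξ dd r d e) (hef : rD ξ dd r e f) :
    rD ξ dd r d f :=
  r.rel_trans hde hef

lemma rD_antisymm {d e : (Fin n ⊕ Fin n) →₀ ℕ}
    (hΦ : ∀ lam mu, Φ (nm ξ dd lam mu) = monomial (expof lam mu) 1)
    (hde : rD ξ dd r d e) (hed : rD ξ dd r e d) : d = e :=
  nmD_injective hΦ (r.rel_antisymm hde hed)

lemma rD_add {d e : (Fin n ⊕ Fin n) →₀ ℕ} (hr : IsNormalOrdering ξ dd r) (hde : rD ξ dd r d e)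
    (c : (Fin n ⊕ Fin n) →₀ ℕ) :
    rD ξ dd r (d + c) (e + c) :=
  hr.2 _ _ _ _ _ _ hde

lemma rD_zero_left (hr : IsNormalOrdering ξ dd r) (d : (Fin n ⊕ Fin n) →₀ ℕ) : rD ξ dd r 0 d :=
  hr.1 _ _

lemma rD_of_le {d e : (Fin n ⊕ Fin n) →₀ ℕ} (hr : IsNormalOrdering ξ dd r) (hde : d ≤ e) :
    rD ξ dd r d e := by
  simpa [tsub_add_cancel_of_le hde] using rD_add hr (rD_zero_left hr (e - d)) d

lemma wellFounded_rD (hΦ : ∀ lam mu, Φ (nm ξ dd lam mu) = monomial (expof lam mu) 1)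
    (hr : IsNormalOrdering ξ dd r) : WellFounded fun d e => rD ξ dd r d e ∧ d ≠ e := by
  have : IsStrictOrder _ fun d e => rD ξ dd r d e ∧ d ≠ e :=
    { irrefl := fun d h => h.2 rfl
      trans := fun d e f hde hef =>
        ⟨rD_trans hde.1 hef.1, fun hdf => hde.2 (rD_antisymm hΦ hde.1 (hdf ▸ hef.1))⟩ }
  refine RelEmbedding.wellFounded_iff_isEmpty.2 ⟨fun g => ?_⟩
  obtain ⟨i, j, hij, hle⟩ := wellQuasiOrdered_le g
  exact (g.map_rel_iff.2 hij).2 (rD_antisymm hΦ (g.map_rel_iff.2 hij).1 (rD_of_le hr hle))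

lemma exists_isLTerm (r : TO (NormalMonomials ξ dd)) {x : W} (hx : x ≠ 0) :
    ∃ d, IsLTerm ξ dd Φ r x d := by
  have : (Φ x).support.Nonempty := by simpa using hx
  exact r.exists_max_image (nmD ξ dd) this

lemma IsLTerm.ne_zero {x : W} {d : (Fin n ⊕ Fin n) →₀ ℕ} (h : IsLTerm ξ dd Φ r x d) :
    x ≠ 0 := by
  rintro rfl
  simpa using h.1

lemma IsLTerm.not_lt (hΦ : ∀ lam mu, Φ (nm ξ dd lam mu) = monomial (expof lam mu) 1)
    (hr : IsNormalOrdering ξ dd r) {x : W} {d g : (Fin n ⊕ Fin n) →₀ ℕ}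
    (h : IsLTerm ξ dd Φ r x d) (hg : g ∈ (Φ x).support) : ¬ d < g :=
  fun hdg => hdg.ne (rD_antisymm hΦ (rD_of_le hr hdg.le) (h.2 g hg))

lemma apply_nmD_mul_nmD_sub_monomial_mem (hξ : ∀ i j, ξ i * ξ j = ξ j * ξ i)
    (hdd : ∀ i j, dd i * dd j = dd j * dd i)
    (hrel : ∀ i j, dd i * ξ j - ξ j * dd i = if i = j then (1 : W) else 0)
    (hΦ : ∀ lam mu, Φ (nm ξ dd lam mu) = monomial (expof lam mu) 1) (m g : (Fin n ⊕ Fin n) →₀ ℕ) :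
    Φ (nmD ξ dd m * nmD ξ dd g) - monomial (m + g) 1 ∈ restrictSupport K (Set.Iio (m + g)) := by
  have h := apply_nm_mul_nm_sub_monomial_mem hξ hdd hrel hΦ (fun i => m (Sum.inl i))
    (fun i => m (Sum.inr i)) (fun i => g (Sum.inl i)) (fun i => g (Sum.inr i))
  rwa [expof_add, expof_inl_inr, expof_inl_inr] at h

lemma apply_nmD_mul_sub_monomial_mul_mem (hξ : ∀ i j, ξ i * ξ j = ξ j * ξ i)
    (hdd : ∀ i j, dd i * dd j = dd j * dd i)
    (hrel : ∀ i j, dd i * ξ j - ξ j * dd i = if i = j then (1 : W) else 0)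
    (hΦ : ∀ lam mu, Φ (nm ξ dd lam mu) = monomial (expof lam mu) 1) (m : (Fin n ⊕ Fin n) →₀ ℕ)
    (x : W) :
    Φ (nmD ξ dd m * x) - monomial m 1 * Φ x
      ∈ restrictSupport K {e | ∃ g ∈ (Φ x).support, e < m + g} := by
  obtain ⟨p, rfl⟩ := Φ.symm.surjective x
  have hp : Φ.symm p = ∑ g ∈ p.support, coeff g p • (nmD ξ dd g : W) :=
    Φ.injective (by simp [map_sum, apply_nmD hΦ, smul_monomial, support_sum_monomial_coeff])
  have hshift : monomial m 1 * p = ∑ g ∈ p.support, coeff g p • monomial (m + g) (1 : K) := by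
    conv_lhs => rw [p.as_sum, Finset.mul_sum]
    simp [monomial_mul, smul_monomial]
  rw [LinearEquiv.apply_symm_apply, hshift, hp, Finset.mul_sum, map_sum, ← Finset.sum_sub_distrib]
  refine Submodule.sum_mem _ fun g hg => ?_
  rw [mul_smul_comm, map_smul, ← smul_sub]
  refine Submodule.smul_mem _ _ (restrictSupport_mono K (fun e (he : e < m + g) => ?_)
    (apply_nmD_mul_nmD_sub_monomial_mem hξ hdd hrel hΦ m g))
  exact ⟨g, hg, he⟩

lemma exists_mul_coeff_eq_one (hξ : ∀ i j, ξ i * ξ j = ξ j * ξ i)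
    (hdd : ∀ i j, dd i * dd j = dd j * dd i)
    (hrel : ∀ i j, dd i * ξ j - ξ j * dd i = if i = j then (1 : W) else 0)
    (hΦ : ∀ lam mu, Φ (nm ξ dd lam mu) = monomial (expof lam mu) 1)
    (hr : IsNormalOrdering ξ dd r) {b : W} {db f : (Fin n ⊕ Fin n) →₀ ℕ}
    (hb : IsLTerm ξ dd Φ r b db) (hdf : db ≤ f) :
    ∃ w : W, coeff f (Φ (w * b)) = 1 ∧
      ∀ r' : TO (NormalMonomials ξ dd), IsNormalOrdering ξ dd r' → IsLTerm ξ dd Φ r' b db →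
        ∀ g ∈ (Φ (w * b)).support, rD ξ dd r' g f := by
  set m := f - db
  have hf : m + db = f := tsub_add_cancel_of_le hdf
  have hmem := (mem_restrictSupport_iff K).1
    (apply_nmD_mul_sub_monomial_mul_mem hξ hdd hrel hΦ m b)
  have hcoeff : coeff f (Φ (nmD ξ dd m * b)) = coeff db (Φ b) := by
    have hfS : coeff (m + db) (Φ (nmD ξ dd m * b) - monomial m 1 * Φ b) = 0 := by
      refine notMem_support_iff.1 fun hfs => ?_
      obtain ⟨g, hg, hfg⟩ := hmem hfs
      exact hb.not_lt hΦ hr hg (lt_of_add_lt_add_left hfg)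
    rw [← hf]
    rwa [coeff_sub, sub_eq_zero, coeff_monomial_mul, one_mul] at hfS
  have hsupp : ∀ e ∈ (Φ (nmD ξ dd m * b)).support, ∃ g ∈ (Φ b).support, e ≤ m + g := by
    intro e he
    rw [← sub_add_cancel (Φ (nmD ξ dd m * b)) (monomial m 1 * Φ b)] at he
    rcases Finset.mem_union.1 (support_add he) with he | he
    · obtain ⟨g, hg, heg⟩ := hmem he
      exact ⟨g, hg, heg.le⟩
    · rw [mem_support_iff, coeff_monomial_mul'] at he
      split_ifs at he with hme
      · exact ⟨e - m, mem_support_iff.2 (by simpa using he), (add_tsub_cancel_of_le hme).ge⟩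
      · exact absurd rfl he
  have hc : coeff db (Φ b) ≠ 0 := mem_support_iff.1 hb.1
  refine ⟨(coeff db (Φ b))⁻¹ • nmD ξ dd m, ?_, fun r' hr' hb' g hg => ?_⟩
  · rw [smul_mul_assoc, map_smul, coeff_smul, hcoeff, smul_eq_mul, inv_mul_cancel₀ hc]
  · rw [smul_mul_assoc, map_smul] at hg
    obtain ⟨g', hg', hgg'⟩ := hsupp g (support_smul hg)
    refine rD_trans (rD_of_le hr' hgg') ?_
    rw [add_comm m, ← hf, add_comm m]
    exact rD_add hr' (hb'.2 g' hg') m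

def IsLeadingCover (Φ : W ≃ₗ[K] MvPolynomial (Fin n ⊕ Fin n) K)
    (r r' : TO (NormalMonomials ξ dd)) (L : Submodule W W) (B : Set W) : Prop :=
  ∀ x ∈ L, ∀ f, IsLTerm ξ dd Φ r x f →
    ∃ b ∈ B, ∃ db, IsLTerm ξ dd Φ r b db ∧ IsLTerm ξ dd Φ r' b db ∧ db ≤ f

lemma IsLeadingCover.mono {B' : Set W} (h : IsLeadingCover Φ r r' L B) (hBB' : B ⊆ B') :
    IsLeadingCover Φ r r' L B' := fun x hx f hf => by
  obtain ⟨b, hb, rest⟩ := h x hx f hf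
  exact ⟨b, hBB' hb, rest⟩

lemma IsLeadingCover.exists_reduction (hξ : ∀ i j, ξ i * ξ j = ξ j * ξ i)
    (hdd : ∀ i j, dd i * dd j = dd j * dd i)
    (hrel : ∀ i j, dd i * ξ j - ξ j * dd i = if i = j then (1 : W) else 0)
    (hΦ : ∀ lam mu, Φ (nm ξ dd lam mu) = monomial (expof lam mu) 1)
    (hr : IsNormalOrdering ξ dd r) (hr' : IsNormalOrdering ξ dd r') (hBL : B ⊆ L)
    (hB : IsLeadingCover Φ r r' L B) {x : W} (hx : x ∈ L) {f : (Fin n ⊕ Fin n) →₀ ℕ}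
    (hf : IsLTerm ξ dd Φ r x f) :
    ∃ y ∈ L, x - y ∈ Submodule.span W B ∧ (∀ g ∈ (Φ y).support, rD ξ dd r g f ∧ g ≠ f) ∧
      ∀ e, IsLTerm ξ dd Φ r' x e →
        (∃ b ∈ B, ∃ db, IsLTerm ξ dd Φ r' b db ∧ db ≤ e) ∨ IsLTerm ξ dd Φ r' y e := by
  obtain ⟨b, hbB, db, hbr, hbr', hdf⟩ := hB x hx f hf
  obtain ⟨w, hw, hwle⟩ := exists_mul_coeff_eq_one hξ hdd hrel hΦ hr hbr hdf
  set c := coeff f (Φ x)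
  have hwb : w * b ∈ L := L.smul_mem w (hBL hbB)
  have hΦy : Φ (x - c • (w * b)) = Φ x - c • Φ (w * b) := by simp
  refine ⟨x - c • (w * b), L.sub_mem hx (L.smul_of_tower_mem c hwb), ?_, ?_, ?_⟩
  · rw [sub_sub_cancel]
    exact Submodule.smul_of_tower_mem _ c (Submodule.smul_mem _ w (Submodule.subset_span hbB))
  · intro g hg
    refine ⟨?_, ?_⟩
    · rw [hΦy] at hg
      rcases Finset.mem_union.1 (support_sub_smul_subset _ _ _ hg) with hg | hg
      · exact hf.2 g hg
      · exact hwle r hr hbr g hg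
    · rintro rfl
      rw [mem_support_iff, hΦy, coeff_sub, coeff_smul, hw, smul_eq_mul, mul_one, sub_self] at hg
      exact hg rfl
  · intro e he
    by_cases hef : e = f
    · exact .inl ⟨b, hbB, db, hbr', hef ▸ hdf⟩
    have hwe : coeff e (Φ (w * b)) = 0 := notMem_support_iff.1 fun hwe =>
      hef (rD_antisymm hΦ (hwle r' hr' hbr' e hwe) (he.2 f hf.1))
    refine .inr ⟨?_, fun g hg => ?_⟩
    · rw [mem_support_iff, hΦy, coeff_sub, coeff_smul, hwe, smul_zero, sub_zero]
      exact mem_support_iff.1 he.1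
    · rw [hΦy] at hg
      rcases Finset.mem_union.1 (support_sub_smul_subset _ _ _ hg) with hg | hg
      · exact he.2 g hg
      · exact rD_trans (hwle r' hr' hbr' g hg) (he.2 f hf.1)

lemma IsLeadingCover.mem_span_and_exists_dvd (hξ : ∀ i j, ξ i * ξ j = ξ j * ξ i)
    (hdd : ∀ i j, dd i * dd j = dd j * dd i)
    (hrel : ∀ i j, dd i * ξ j - ξ j * dd i = if i = j then (1 : W) else 0)
    (hΦ : ∀ lam mu, Φ (nm ξ dd lam mu) = monomial (expof lam mu) 1)
    (hr : IsNormalOrdering ξ dd r) (hr' : IsNormalOrdering ξ dd r') (hBL : B ⊆ L)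
    (hB : IsLeadingCover Φ r r' L B) {x : W} (hx : x ∈ L) :
    x ∈ Submodule.span W B ∧
      ∀ e, IsLTerm ξ dd Φ r' x e → ∃ b ∈ B, ∃ db, IsLTerm ξ dd Φ r' b db ∧ db ≤ e := by
  have hzero : (0 : W) ∈ Submodule.span W B ∧
      ∀ e, IsLTerm ξ dd Φ r' 0 e → ∃ b ∈ B, ∃ db, IsLTerm ξ dd Φ r' b db ∧ db ≤ e :=
    ⟨zero_mem _, fun e he => (he.ne_zero rfl).elim⟩
  rcases eq_or_ne x 0 with rfl | hx0
  · exact hzero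
  obtain ⟨f, hf⟩ := exists_isLTerm (Φ := Φ) r hx0
  induction f using (wellFounded_rD hΦ hr).induction generalizing x with
  | _ f ih =>
  obtain ⟨y, hyL, hxy, hyf, hye⟩ := hB.exists_reduction hξ hdd hrel hΦ hr hr' hBL hx hf
  have hy : y ∈ Submodule.span W B ∧
      ∀ e, IsLTerm ξ dd Φ r' y e → ∃ b ∈ B, ∃ db, IsLTerm ξ dd Φ r' b db ∧ db ≤ e := by
    rcases eq_or_ne y 0 with rfl | hy0
    · exact hzero
    obtain ⟨f', hf'⟩ := exists_isLTerm (Φ := Φ) r hy0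
    exact ih f' (hyf f' hf'.1) hyL hy0 hf'
  refine ⟨sub_add_cancel x y ▸ add_mem hxy hy.1, fun e he => ?_⟩
  exact (hye e he).elim id (hy.2 e)

lemma isGroebnerBasis_of_isLeadingCover (hξ : ∀ i j, ξ i * ξ j = ξ j * ξ i)
    (hdd : ∀ i j, dd i * dd j = dd j * dd i)
    (hrel : ∀ i j, dd i * ξ j - ξ j * dd i = if i = j then (1 : W) else 0)
    (hΦ : ∀ lam mu, Φ (nm ξ dd lam mu) = monomial (expof lam mu) 1)
    (hr : IsNormalOrdering ξ dd r) (hr' : IsNormalOrdering ξ dd r') {B : Finset W}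
    (hBL : (B : Set W) ⊆ L) (hB : IsLeadingCover Φ r r' L B) :
    IsGroebnerBasis ξ dd Φ r' L B := by
  have hdiv := fun x (hx : x ∈ L) => hB.mem_span_and_exists_dvd hξ hdd hrel hΦ hr hr' hBL hx
  refine ⟨hBL, le_antisymm (Submodule.span_le.2 hBL) fun x hx => (hdiv x hx).1, ?_⟩
  refine le_antisymm (Ideal.span_le.2 ?_) (Ideal.span_mono ?_)
  · rintro _ ⟨x, hx, -, e, he, rfl⟩
    obtain ⟨b, hbB, db, hb, hde⟩ := (hdiv x hx).2 e he
    rw [show monomial e (1 : K) = monomial (e - db) 1 * monomial db 1 by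
      rw [monomial_mul, one_mul, tsub_add_cancel_of_le hde]]
    exact Ideal.mul_mem_left _ _ (Ideal.subset_span ⟨b, hbB, hb.ne_zero, db, hb, rfl⟩)
  · rintro _ ⟨b, hbB, hb0, d, hd, rfl⟩
    exact ⟨b, hBL hbB, hb0, d, hd, rfl⟩

/-- Dickson's lemma gives finitely many elements of `L` whose `r`-leading exponents divide all
others; requiring those leading exponents to stay leading is an open condition. -/
lemma exists_isLeadingCover_nhds (L : Submodule W W) (r : TO (NormalMonomials ξ dd)) :
    ∃ B : Finset W, (B : Set W) ⊆ L ∧ ∃ U : Set (TO (NormalMonomials ξ dd)),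
      IsOpen U ∧ r ∈ U ∧ ∀ r' ∈ U, IsLeadingCover Φ r r' L B := by
  let E := {d | ∃ x ∈ L, IsLTerm ξ dd Φ r x d}
  choose! lead hleadL hlead using fun d (hd : d ∈ E) => hd
  let D := {d | Minimal (· ∈ E) d}
  have hD : D.Finite := WellQuasiOrderedLE.finite_of_isAntichain (setOfPred_minimal_antichain _)
  refine ⟨(hD.image lead).toFinset, ?_,
    ⋂ d ∈ D, ⋂ c ∈ (Φ (lead d)).support, USet (nmD ξ dd c) (nmD ξ dd d), ?_, ?_, ?_⟩
  · intro b hb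
    obtain ⟨d, hd, rfl⟩ := (hD.image lead).mem_toFinset.1 hb
    exact hleadL d hd.prop
  · exact hD.isOpen_biInter fun d _ => isOpen_biInter_finset fun c _ => TO.isOpen_USet _ _
  · simp only [Set.mem_iInter]
    exact fun d hd c hc => (hlead d hd.prop).2 c hc
  · intro r' hr' x hx f hf
    obtain ⟨d, hdf, hd⟩ := exists_minimal_le_of_wellFoundedLT (· ∈ E) f ⟨x, hx, hf⟩
    simp only [Set.mem_iInter] at hr'
    exact ⟨lead d, (hD.image lead).mem_toFinset.2 ⟨d, hd, rfl⟩, d, hlead d hd.prop,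
      ⟨(hlead d hd.prop).1, hr' d hd⟩, hdf⟩

end WeylAlgebra

theorem exists_universal_groebnerBasis_general
    {K : Type*} [Field K] {n : ℕ}
    {W : Type*} [Ring W] [Algebra K W] (ξ dd : Fin n → W)
    (hξcomm : ∀ i j, ξ i * ξ j = ξ j * ξ i)
    (hddcomm : ∀ i j, dd i * dd j = dd j * dd i)
    (hrel : ∀ i j, dd i * ξ j - ξ j * dd i = if i = j then (1 : W) else 0)
    (Φ : W ≃ₗ[K] MvPolynomial (Fin n ⊕ Fin n) K)
    (hΦ : ∀ lam mu, Φ (nm ξ dd lam mu) = MvPolynomial.monomial (expof lam mu) 1)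
    (L : Submodule W W) :
    ∃ V : Finset W, ∀ r : TO ↥(NormalMonomials ξ dd),
      IsNormalOrdering ξ dd r → IsGroebnerBasis ξ dd Φ r L V := by
  classical
  choose B hBL U hUopen hrU hBU using
    fun r : NOSet ξ dd => exists_isLeadingCover_nhds (Φ := Φ) L r.1
  obtain ⟨t, hcover⟩ := (isClosed_NOSet ξ dd).isCompact.elim_finite_subcover U hUopen
    fun r hr => Set.mem_iUnion.2 ⟨⟨r, hr⟩, hrU _⟩
  refine ⟨t.biUnion B, fun r' hr' => ?_⟩
  obtain ⟨r, hrt, hr'U⟩ := Set.mem_iUnion₂.1 (hcover hr')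
  have hVL : (t.biUnion B : Set W) ⊆ L := by
    simpa only [Finset.coe_biUnion, Set.iUnion_subset_iff] using fun r _ => hBL r
  exact isGroebnerBasis_of_isLeadingCover hξcomm hddcomm hrel hΦ r.2 hr' hVL
    ((hBU r r' hr'U).mono (Finset.coe_subset.2 (Finset.subset_biUnion_of_mem B hrt)))

/-- every left ideal `L` of `W` admits a universal Gröbner basis, i.e. a
finite subset `V ⊆ L` that is a Gröbner basis of `L` with respect to every normal ordering
`≼` of `W`. -/
theorem exists_universal_groebnerBasis
    {K : Type*} [Field K] [CharZero K] {n : ℕ} (hn : 1 ≤ n)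
    {W : Type*} [Ring W] [Algebra K W] (ξ dd : Fin n → W)
    (hξcomm : ∀ i j, ξ i * ξ j = ξ j * ξ i)
    (hddcomm : ∀ i j, dd i * dd j = dd j * dd i)
    (hrel : ∀ i j, dd i * ξ j - ξ j * dd i = if i = j then (1 : W) else 0)
    (Φ : W ≃ₗ[K] MvPolynomial (Fin n ⊕ Fin n) K)
    (hΦ : ∀ lam mu, Φ (nm ξ dd lam mu) = MvPolynomial.monomial (expof lam mu) 1)
    (L : Submodule W W) :
    ∃ V : Finset W, ∀ r : TO ↥(NormalMonomials ξ dd),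
      IsNormalOrdering ξ dd r → IsGroebnerBasis ξ dd Φ r L V :=
  exists_universal_groebnerBasis_general ξ dd hξcomm hddcomm hrel Φ hΦ L
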